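/- arXiv:2208.06862 — 4 statements merged into one kernel-verified Lean document; each statement's English description precedes it below -/
import Mathlib

section
/- Let p be an odd prime and Λ = ℤ_p⟦T⟧. Let X be a nonzero finitely generated Λ-module that is annihilated by p^n for some n ≥ 1 and contains no nonzero finite Λ-submodules. Then there exists a surjective Λ-module homomorphism X → Λ/pΛ whose kernel again contains no nonzero finite Λ-submodules. -/
set_option synthInstance.maxHeartbeats 1000000
set_option maxHeartbeats 1000000

/-- The Iwasawa algebra `Λ = ℤ_p⟦T⟧`. -/
noncomputable abbrev IwasawaAlgebra (p : ℕ) [Fact p.Prime] : Type :=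
  PowerSeries ℤ_[p]

namespace IwasawaAux

noncomputable def rho (p : ℕ) [Fact p.Prime] : PowerSeries ℤ_[p] →+* PowerSeries (ZMod p) :=
  PowerSeries.map (PadicInt.toZMod)

lemma rho_surjective (p : ℕ) [Fact p.Prime] : Function.Surjective (rho p) := by
  haveI : NeZero p := ⟨(Fact.out : p.Prime).ne_zero⟩
  intro h
  refine ⟨PowerSeries.mk fun k => (((PowerSeries.coeff k h).val : ℕ) : ℤ_[p]), ?_⟩
  ext k
  rw [rho, PowerSeries.coeff_map, PowerSeries.coeff_mk, map_natCast]
  exact ZMod.natCast_rightInverse _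

lemma ker_rho (p : ℕ) [Fact p.Prime] :
    RingHom.ker (rho p) = Ideal.span {(p : PowerSeries ℤ_[p])} := by
  ext f
  constructor
  · intro hf
    have hdiv : ∀ k, ∃ c : ℤ_[p], (PowerSeries.coeff k f) = (p : ℤ_[p]) * c := by
      intro k
      have h0 : PadicInt.toZMod (PowerSeries.coeff k f) = 0 := by
        have := congrArg (PowerSeries.coeff k) (show rho p f = 0 from hf)
        simpa [rho, PowerSeries.coeff_map] using this
      have h1 : PowerSeries.coeff k f ∈ RingHom.ker (PadicInt.toZMod (p := p)) := h0
      rw [PadicInt.ker_toZMod, PadicInt.maximalIdeal_eq_span_p,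
        Ideal.mem_span_singleton] at h1
      exact h1
    choose c hc using hdiv
    rw [Ideal.mem_span_singleton]
    refine ⟨PowerSeries.mk c, ?_⟩
    ext k
    have hp : (p : PowerSeries ℤ_[p]) = (PowerSeries.C (R := ℤ_[p])) (p : ℤ_[p]) :=
      (map_natCast ((PowerSeries.C (R := ℤ_[p]))) p).symm
    rw [hp, PowerSeries.coeff_C_mul, PowerSeries.coeff_mk]
    exact hc k
  · intro hf
    rw [Ideal.mem_span_singleton] at hf
    obtain ⟨g, rfl⟩ := hf
    have h0 : rho p (p : PowerSeries ℤ_[p]) = 0 := by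
      rw [map_natCast]
      calc (p : PowerSeries (ZMod p))
          = (PowerSeries.C (R := ZMod p)) ((p : ℕ) : ZMod p) := (map_natCast _ p).symm
        _ = 0 := by simp [ZMod.natCast_self]
    rw [RingHom.mem_ker, map_mul, h0, zero_mul]

/-- A finitely generated module over `ℤ_p⟦T⟧` killed by `p^n` and by `T^m` is finite. -/
lemma finite_of_killed {p : ℕ} [Fact p.Prime] (n m : ℕ) (hm : 1 ≤ m)
    (X : Type) [AddCommGroup X] [Module (PowerSeries ℤ_[p]) X]
    [Module.Finite (PowerSeries ℤ_[p]) X]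
    (hpn : ∀ x : X, ((p : PowerSeries ℤ_[p]) ^ n) • x = 0)
    (hXm : ∀ x : X, ((PowerSeries.X : PowerSeries ℤ_[p]) ^ m) • x = 0) :
    Finite X := by
  classical
  set R := PowerSeries ℤ_[p] with hR
  letI : Module ℤ_[p] X := Module.compHom X ((PowerSeries.C (R := ℤ_[p])) : ℤ_[p] →+* R)
  have hsm : ∀ (a : ℤ_[p]) (x : X), a • x = ((PowerSeries.C (R := ℤ_[p])) a) • x := fun _ _ => rfl
  obtain ⟨S, hS⟩ : (⊤ : Submodule R X).FG := Module.finite_def.mp inferInstance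
  set G : Finset X := (S ×ˢ Finset.range m).image
    (fun q => ((PowerSeries.X : R) ^ q.2) • q.1) with hG
  have hgen : ∀ (r : R) (s : X), s ∈ S → r • s ∈ Submodule.span ℤ_[p] (G : Set X) := by
    intro r s hs
    set t : R := ∑ j ∈ Finset.range m, (PowerSeries.C (R := ℤ_[p])) (PowerSeries.coeff j r) *
      PowerSeries.X ^ j with ht
    have hdvd : (PowerSeries.X : R) ^ m ∣ (r - t) := by
      rw [PowerSeries.X_pow_dvd_iff]
      intro i hi
      rw [map_sub, ht, map_sum]
      have : ∀ j ∈ Finset.range m,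
          PowerSeries.coeff i ((PowerSeries.C (R := ℤ_[p])) (PowerSeries.coeff j r) *
            PowerSeries.X ^ j) = if i = j then PowerSeries.coeff j r else 0 := by
        intro j _
        rw [PowerSeries.coeff_C_mul, PowerSeries.coeff_X_pow]
        by_cases h : i = j <;> simp [h]
      rw [Finset.sum_congr rfl this, Finset.sum_ite_eq (Finset.range m) i
        (fun j => PowerSeries.coeff j r)]
      simp [Finset.mem_range.mpr hi]
    obtain ⟨q, hq⟩ := hdvd
    have hrs : r • s = t • s := by
      have : r = t + PowerSeries.X ^ m * q := by rw [← hq]; ring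
      rw [this, add_smul, mul_smul, hXm, add_zero]
    rw [hrs, ht, Finset.sum_smul]
    refine Submodule.sum_mem _ ?_
    intro j hj
    rw [mul_smul, ← hsm]
    refine Submodule.smul_mem _ _ (Submodule.subset_span ?_)
    rw [hG]
    simp only [Finset.coe_image, Set.mem_image, Finset.mem_coe, Finset.mem_product]
    exact ⟨(s, j), ⟨hs, hj⟩, rfl⟩
  haveI : Module.Finite ℤ_[p] X := by
    rw [Module.finite_def]
    refine ⟨G, ?_⟩
    rw [eq_top_iff]
    intro x _
    have hx : x ∈ (⊤ : Submodule R X) := trivial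
    rw [← hS] at hx
    set W : Submodule R X :=
      { carrier := (Submodule.span ℤ_[p] (G : Set X) : Set X)
        add_mem' := fun ha hb => Submodule.add_mem _ ha hb
        zero_mem' := Submodule.zero_mem _
        smul_mem' := by
          intro r x hx
          refine Submodule.span_induction ?_ ?_ ?_ ?_ hx
          · intro g hg
            simp only [hG, Finset.coe_image, Set.mem_image, Finset.mem_coe,
              Finset.mem_product] at hg
            obtain ⟨⟨s, j⟩, ⟨hs, _⟩, rfl⟩ := hg
            rw [← mul_smul]
            exact hgen _ _ hs
          · rw [smul_zero]; exact Submodule.zero_mem _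
          · intro y z _ _ hy hz
            rw [smul_add]; exact Submodule.add_mem _ hy hz
          · intro a y _ hy
            have : r • a • y = a • (r • y) := by
              rw [hsm, hsm, ← mul_smul, ← mul_smul, mul_comm]
            rw [this]
            exact Submodule.smul_mem _ _ hy } with hW
    have hle : Submodule.span R (S : Set X) ≤ W := by
      rw [Submodule.span_le]
      intro s hs
      show s ∈ Submodule.span ℤ_[p] (G : Set X)
      have : s = ((PowerSeries.X : R) ^ 0) • s := by rw [pow_zero, one_smul]
      rw [this]
      refine Submodule.subset_span ?_
      simp only [hG, Finset.coe_image, Set.mem_image, Finset.mem_coe, Finset.mem_product]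
      exact ⟨(s, 0), ⟨hs, Finset.mem_range.mpr hm⟩, rfl⟩
    exact hle hx
  haveI : NeZero (p ^ n) := ⟨pow_ne_zero n (Fact.out : p.Prime).ne_zero⟩
  obtain ⟨s, f, hf⟩ := Module.Finite.exists_fin' ℤ_[p] X
  refine Finite.of_surjective
    (fun v : Fin s → ZMod (p ^ n) => f fun i => (((v i).val : ℕ) : ℤ_[p])) ?_
  intro x
  obtain ⟨a, rfl⟩ := hf x
  refine ⟨fun i => PadicInt.toZModPow n (a i), ?_⟩
  have key : ∀ i : Fin s, ∃ d : ℤ_[p],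
      (((PadicInt.toZModPow n (a i)).val : ℕ) : ℤ_[p]) - a i = (p : ℤ_[p]) ^ n * d := by
    intro i
    have hker : (((PadicInt.toZModPow n (a i)).val : ℕ) : ℤ_[p]) - a i ∈
        RingHom.ker (PadicInt.toZModPow (p := p) n) := by
      rw [RingHom.mem_ker, map_sub, map_natCast, ZMod.natCast_rightInverse _, sub_self]
    rw [PadicInt.ker_toZModPow, Ideal.mem_span_singleton] at hker
    exact hker
  choose d hd using key
  have hCp : ((p : ℤ_[p]) ^ n) • f d = 0 := by
    rw [hsm, map_pow, map_natCast]
    exact hpn _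
  have : (fun i => (((PadicInt.toZModPow n (a i)).val : ℕ) : ℤ_[p])) =
      a + ((p : ℤ_[p]) ^ n) • d := by
    funext i
    simp only [Pi.add_apply, Pi.smul_apply, smul_eq_mul]
    rw [← hd i]; ring
  show f (fun i => (((PadicInt.toZModPow n (a i)).val : ℕ) : ℤ_[p])) = f a
  rw [this, map_add, map_smul, hCp, add_zero]

end IwasawaAux

theorem exists_surjection_to_omega (p : ℕ) [Fact p.Prime] (hp : Odd p)
    (n : ℕ) (hn : 1 ≤ n)
    (X : Type) [AddCommGroup X] [Module (IwasawaAlgebra p) X] [Nontrivial X]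
    [Module.Finite (IwasawaAlgebra p) X]
    (hann : ∀ x : X, ((p : IwasawaAlgebra p) ^ n) • x = 0)
    (hfin : ∀ N : Submodule (IwasawaAlgebra p) X, (N : Set X).Finite → N = ⊥) :
    ∃ f : X →ₗ[IwasawaAlgebra p]
        (IwasawaAlgebra p ⧸ Ideal.span {(p : IwasawaAlgebra p)}),
      Function.Surjective f ∧
        ∀ N : Submodule (IwasawaAlgebra p) X,
          N ≤ LinearMap.ker f → (N : Set X).Finite → N = ⊥ := by
  classical
  have hfin' : ∀ (m : ℕ), 1 ≤ m →
      (∀ x : X, ((PowerSeries.X : IwasawaAlgebra p) ^ m) • x = 0) → False := by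
    intro m hm hkill
    haveI : Finite X := IwasawaAux.finite_of_killed n m hm X hann hkill
    obtain ⟨x, y, hxy⟩ := exists_pair_ne X
    have h := hfin ⊤ (Set.toFinite _)
    apply hxy
    have hx : x ∈ (⊥ : Submodule (IwasawaAlgebra p) X) := h ▸ Submodule.mem_top
    have hy : y ∈ (⊥ : Submodule (IwasawaAlgebra p) X) := h ▸ Submodule.mem_top
    rw [Submodule.mem_bot] at hx hy
    rw [hx, hy]
  have hker : RingHom.ker (IwasawaAux.rho p)
      = Ideal.span {(p : IwasawaAlgebra p)} := IwasawaAux.ker_rho p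
  let e : (IwasawaAlgebra p ⧸ Ideal.span {(p : IwasawaAlgebra p)})
      ≃+* PowerSeries (ZMod p) :=
    (Ideal.quotEquivOfEq hker.symm).trans
      (RingHom.quotientKerEquivOfSurjective (IwasawaAux.rho_surjective p))
  have he : ∀ r : IwasawaAlgebra p,
      e (Ideal.Quotient.mk (Ideal.span {(p : IwasawaAlgebra p)}) r)
        = IwasawaAux.rho p r := by
    intro r
    simp [e, Ideal.quotEquivOfEq_mk, RingHom.quotientKerEquivOfSurjective,
      RingHom.kerLift_mk]
  haveI hdom : IsDomain (IwasawaAlgebra p ⧸ Ideal.span {(p : IwasawaAlgebra p)}) :=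
    Function.Injective.isDomain e.toRingHom e.injective
  haveI hpir : IsPrincipalIdealRing
      (IwasawaAlgebra p ⧸ Ideal.span {(p : IwasawaAlgebra p)}) :=
    IsPrincipalIdealRing.of_surjective (e.symm : PowerSeries (ZMod p) →+*
      (IwasawaAlgebra p ⧸ Ideal.span {(p : IwasawaAlgebra p)})) e.symm.surjective
  haveI hnzd : NoZeroDivisors (IwasawaAlgebra p ⧸ Ideal.span {(p : IwasawaAlgebra p)}) :=
    IsDomain.to_noZeroDivisors _
  have hmemN : ∀ z : X,
      z ∈ (Ideal.span {(p : IwasawaAlgebra p)} • (⊤ : Submodule (IwasawaAlgebra p) X)) →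
      ∃ y : X, z = (p : IwasawaAlgebra p) • y := by
    intro z hz
    rw [Submodule.ideal_span_singleton_smul] at hz
    rw [← SetLike.mem_coe, Submodule.coe_pointwise_smul] at hz
    obtain ⟨y, _, hy⟩ := hz
    exact ⟨y, hy.symm⟩
  have hsmulmk : ∀ (r : IwasawaAlgebra p) (x : X),
      (Ideal.Quotient.mk (Ideal.span {(p : IwasawaAlgebra p)}) r) •
        (Submodule.Quotient.mk
          (p := Ideal.span {(p : IwasawaAlgebra p)} • (⊤ : Submodule (IwasawaAlgebra p) X)) x)
        = Submodule.Quotient.mk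
          (p := Ideal.span {(p : IwasawaAlgebra p)} • (⊤ : Submodule (IwasawaAlgebra p) X))
          (r • x) :=
    fun r x => Module.Quotient.mk_smul_mk _ _ r x
  by_cases htor : ∀ mm : X ⧸ (Ideal.span {(p : IwasawaAlgebra p)} •
      (⊤ : Submodule (IwasawaAlgebra p) X)),
      ∃ a : (IwasawaAlgebra p ⧸ Ideal.span {(p : IwasawaAlgebra p)}), a ≠ 0 ∧ a • mm = 0
  · exfalso
    obtain ⟨S, hS⟩ : (⊤ : Submodule (IwasawaAlgebra p) X).FG :=
      Module.finite_def.mp inferInstance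
    choose aa haa0 haa using htor
    set mkN : X → (X ⧸ (Ideal.span {(p : IwasawaAlgebra p)} •
      (⊤ : Submodule (IwasawaAlgebra p) X))) := fun z => Submodule.Quotient.mk z with hmkN
    have ha0 : (∏ s ∈ S, aa (mkN s)) ≠ 0 :=
      Finset.prod_ne_zero_iff.mpr fun s _ => haa0 _
    have hannM : ∀ x : X, (∏ s ∈ S, aa (mkN s)) • (Submodule.Quotient.mk
        (p := Ideal.span {(p : IwasawaAlgebra p)} • (⊤ : Submodule (IwasawaAlgebra p) X)) x)
        = 0 := by
      have hZ : ∀ s ∈ S, s ∈ ({z : X | (∏ s ∈ S, aa (mkN s)) • (Submodule.Quotient.mk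
          (p := Ideal.span {(p : IwasawaAlgebra p)} •
            (⊤ : Submodule (IwasawaAlgebra p) X)) z) = 0} : Set X) := by
        intro s hs
        show (∏ t ∈ S, aa (mkN t)) • (Submodule.Quotient.mk s) = 0
        rw [← Finset.mul_prod_erase S (fun t => aa (mkN t)) hs, mul_comm, mul_smul, haa (mkN s), smul_zero]
      set Z : Submodule (IwasawaAlgebra p) X :=
        { carrier := {z : X | (∏ s ∈ S, aa (mkN s)) • (Submodule.Quotient.mk
            (p := Ideal.span {(p : IwasawaAlgebra p)} •
              (⊤ : Submodule (IwasawaAlgebra p) X)) z) = 0}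
          add_mem' := by
            intro u v hu hv
            show (∏ s ∈ S, aa (mkN s)) • (Submodule.Quotient.mk (u + v)) = 0
            rw [Submodule.Quotient.mk_add, smul_add, hu, hv, add_zero]
          zero_mem' := by
            show (∏ s ∈ S, aa (mkN s)) • (Submodule.Quotient.mk 0) = 0
            rw [Submodule.Quotient.mk_zero, smul_zero]
          smul_mem' := by
            intro r z hz
            show (∏ s ∈ S, aa (mkN s)) • (Submodule.Quotient.mk (r • z)) = 0
            rw [← hsmulmk r z, smul_comm, hz, smul_zero] } with hZdef
      intro x
      have hxZ : x ∈ Z := by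
        have : x ∈ Submodule.span (IwasawaAlgebra p) (S : Set X) := by
          rw [hS]; trivial
        exact (Submodule.span_le.mpr (fun s hs => hZ s hs)) this
      exact hxZ
    -- transfer to the power series side
    have hw : e (∏ s ∈ S, aa (mkN s)) ≠ 0 := fun h => ha0 (e.injective (by rw [h, map_zero]))
    obtain ⟨k, u, hku⟩ :=
      IsDiscreteValuationRing.associated_pow_irreducible hw PowerSeries.X_irreducible
    have hmk : ∀ x : X, ((PowerSeries.X : IwasawaAlgebra p) ^ k) • x ∈
        (Ideal.span {(p : IwasawaAlgebra p)} • (⊤ : Submodule (IwasawaAlgebra p) X)) := by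
      intro x
      have h1 : Ideal.Quotient.mk (Ideal.span {(p : IwasawaAlgebra p)})
          ((PowerSeries.X : IwasawaAlgebra p) ^ k)
          = (e.symm ↑u) * (∏ s ∈ S, aa (mkN s)) := by
        apply e.injective
        rw [he, map_mul, RingEquiv.apply_symm_apply, map_pow]
        rw [IwasawaAux.rho, PowerSeries.map_X, ← hku]
        ring
      have h2 : Submodule.Quotient.mk
          (p := Ideal.span {(p : IwasawaAlgebra p)} • (⊤ : Submodule (IwasawaAlgebra p) X))
          (((PowerSeries.X : IwasawaAlgebra p) ^ k) • x) = 0 := by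
        rw [← hsmulmk, h1, mul_smul, hannM, smul_zero]
      rwa [Submodule.Quotient.mk_eq_zero] at h2
    have key : ∀ (j : ℕ) (x : X), ∃ y : X,
        ((PowerSeries.X : IwasawaAlgebra p) ^ (k * j)) • x
          = ((p : IwasawaAlgebra p) ^ j) • y := by
      intro j
      induction j with
      | zero => exact fun x => ⟨x, by simp⟩
      | succ j ih =>
        intro x
        obtain ⟨y0, hy0⟩ := hmemN _ (hmk x)
        obtain ⟨y1, hy1⟩ := ih y0
        refine ⟨y1, ?_⟩
        have hpow : (PowerSeries.X : IwasawaAlgebra p) ^ (k * (j + 1))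
            = (PowerSeries.X : IwasawaAlgebra p) ^ (k * j) *
              (PowerSeries.X : IwasawaAlgebra p) ^ k := by
          rw [← pow_add]
          ring_nf
        rw [hpow, mul_smul, hy0, smul_comm, hy1, smul_comm, ← mul_smul, ← pow_succ]
      -- note: last step may need adjustment
    have hkill : ∀ x : X, ((PowerSeries.X : IwasawaAlgebra p) ^ (k * n + 1)) • x = 0 := by
      intro x
      obtain ⟨y, hy⟩ := key n ((PowerSeries.X : IwasawaAlgebra p) • x)
      rw [pow_succ, mul_smul, hy, hann]
    exact hfin' (k * n + 1) (Nat.le_add_left 1 _) hkill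
  · push_neg at htor
    obtain ⟨m₀, hm₀⟩ := htor
    haveI hTower : IsScalarTower (IwasawaAlgebra p)
        (IwasawaAlgebra p ⧸ Ideal.span {(p : IwasawaAlgebra p)})
        (X ⧸ (Ideal.span {(p : IwasawaAlgebra p)} • (⊤ : Submodule (IwasawaAlgebra p) X))) :=
      Module.IsTorsionBySet.isScalarTower _
    haveI hfinM : Module.Finite (IwasawaAlgebra p ⧸ Ideal.span {(p : IwasawaAlgebra p)})
        (X ⧸ (Ideal.span {(p : IwasawaAlgebra p)} • (⊤ : Submodule (IwasawaAlgebra p) X))) :=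
      Module.Finite.of_restrictScalars_finite (IwasawaAlgebra p) _ _
    haveI hntQ : Nontrivial
        ((X ⧸ (Ideal.span {(p : IwasawaAlgebra p)} • (⊤ : Submodule (IwasawaAlgebra p) X))) ⧸
          (Submodule.torsion (IwasawaAlgebra p ⧸ Ideal.span {(p : IwasawaAlgebra p)})
            (X ⧸ (Ideal.span {(p : IwasawaAlgebra p)} •
              (⊤ : Submodule (IwasawaAlgebra p) X))))) := by
      refine ⟨Submodule.Quotient.mk m₀, 0, ?_⟩
      rw [Ne, Submodule.Quotient.mk_eq_zero]
      intro hmem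
      obtain ⟨a, haa⟩ := hmem
      exact hm₀ (a : (IwasawaAlgebra p ⧸ Ideal.span {(p : IwasawaAlgebra p)}))
        (nonZeroDivisors.ne_zero a.2) haa
    haveI hfree : Module.Free (IwasawaAlgebra p ⧸ Ideal.span {(p : IwasawaAlgebra p)})
        ((X ⧸ (Ideal.span {(p : IwasawaAlgebra p)} • (⊤ : Submodule (IwasawaAlgebra p) X))) ⧸
          (Submodule.torsion (IwasawaAlgebra p ⧸ Ideal.span {(p : IwasawaAlgebra p)})
            (X ⧸ (Ideal.span {(p : IwasawaAlgebra p)} •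
              (⊤ : Submodule (IwasawaAlgebra p) X))))) :=
      Module.free_of_finite_type_torsion_free'
    let b := Module.Free.chooseBasis
      (IwasawaAlgebra p ⧸ Ideal.span {(p : IwasawaAlgebra p)})
      ((X ⧸ (Ideal.span {(p : IwasawaAlgebra p)} • (⊤ : Submodule (IwasawaAlgebra p) X))) ⧸
        (Submodule.torsion (IwasawaAlgebra p ⧸ Ideal.span {(p : IwasawaAlgebra p)})
          (X ⧸ (Ideal.span {(p : IwasawaAlgebra p)} •
            (⊤ : Submodule (IwasawaAlgebra p) X)))))
    haveI : Nonempty (Module.Free.ChooseBasisIndex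
      (IwasawaAlgebra p ⧸ Ideal.span {(p : IwasawaAlgebra p)})
      ((X ⧸ (Ideal.span {(p : IwasawaAlgebra p)} • (⊤ : Submodule (IwasawaAlgebra p) X))) ⧸
        (Submodule.torsion (IwasawaAlgebra p ⧸ Ideal.span {(p : IwasawaAlgebra p)})
          (X ⧸ (Ideal.span {(p : IwasawaAlgebra p)} •
            (⊤ : Submodule (IwasawaAlgebra p) X)))))) := b.index_nonempty
    let i := Classical.arbitrary (Module.Free.ChooseBasisIndex
      (IwasawaAlgebra p ⧸ Ideal.span {(p : IwasawaAlgebra p)})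
      ((X ⧸ (Ideal.span {(p : IwasawaAlgebra p)} • (⊤ : Submodule (IwasawaAlgebra p) X))) ⧸
        (Submodule.torsion (IwasawaAlgebra p ⧸ Ideal.span {(p : IwasawaAlgebra p)})
          (X ⧸ (Ideal.span {(p : IwasawaAlgebra p)} •
            (⊤ : Submodule (IwasawaAlgebra p) X))))))
    have hcoord : Function.Surjective (b.coord i) := by
      intro c
      refine ⟨c • b i, ?_⟩
      simp [Module.Basis.coord_apply]
    let g := (b.coord i) ∘ₗ (Submodule.torsion
        (IwasawaAlgebra p ⧸ Ideal.span {(p : IwasawaAlgebra p)})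
        (X ⧸ (Ideal.span {(p : IwasawaAlgebra p)} •
          (⊤ : Submodule (IwasawaAlgebra p) X)))).mkQ
    refine ⟨(g.restrictScalars (IwasawaAlgebra p)) ∘ₗ
      (Ideal.span {(p : IwasawaAlgebra p)} • (⊤ : Submodule (IwasawaAlgebra p) X)).mkQ,
      ?_, fun N' _ hfinN' => hfin N' hfinN'⟩
    intro c
    obtain ⟨q, hq⟩ := hcoord c
    obtain ⟨mq, hmq⟩ := Submodule.mkQ_surjective _ q
    obtain ⟨x, hx⟩ := Submodule.mkQ_surjective _ mq
    refine ⟨x, ?_⟩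
    simp only [LinearMap.comp_apply, LinearMap.restrictScalars_apply]
    rw [hx]
    show (b.coord i) ((Submodule.torsion (IwasawaAlgebra p ⧸ Ideal.span {(p : IwasawaAlgebra p)})
      (X ⧸ (Ideal.span {(p : IwasawaAlgebra p)} •
        (⊤ : Submodule (IwasawaAlgebra p) X)))).mkQ mq) = c
    rw [hmq]
    exact hq
end

section
/- Let p be an odd prime and Λ = ℤ_p⟦T⟧. Let X be a finitely generated torsion Λ-module whose p-torsion is trivial (i.e., px = 0 implies x = 0 for x ∈ X). Then X is a free ℤ_p-module of finite rank. -/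
open PowerSeries

variable {p : ℕ} [Fact p.Prime]

private lemma pdvd_iff_smod (x y : ℤ_[p]) (n : ℕ) :
    (p : ℤ_[p]) ^ n ∣ x - y ↔
      x ≡ y [SMOD ((IsLocalRing.maximalIdeal ℤ_[p]) ^ n • ⊤ :
        Submodule ℤ_[p] ℤ_[p])] := by
  rw [SModEq.sub_mem, ← Ideal.one_eq_top, smul_eq_mul, mul_one,
    PadicInt.maximalIdeal_eq_span_p, Ideal.span_singleton_pow,
    Ideal.mem_span_singleton]

private lemma padic_haus {x : ℤ_[p]} (h : ∀ n, (p : ℤ_[p]) ^ n ∣ x) : x = 0 := by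
  have := (inferInstance : IsAdicComplete (IsLocalRing.maximalIdeal ℤ_[p]) ℤ_[p])
  refine this.toIsHausdorff.haus x fun n => ?_
  rw [← pdvd_iff_smod]
  simpa using h n

private lemma padic_prec (f : ℕ → ℤ_[p])
    (h : ∀ n, (p : ℤ_[p]) ^ n ∣ f (n + 1) - f n) :
    ∃ L, ∀ n, (p : ℤ_[p]) ^ n ∣ L - f n := by
  have htel : ∀ m n, m ≤ n → (p : ℤ_[p]) ^ m ∣ f n - f m := by
    intro m n hmn
    induction n, hmn using Nat.le_induction with
    | base => simp
    | succ n hmn ih =>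
      have h1 : (p : ℤ_[p]) ^ m ∣ f (n + 1) - f n :=
        dvd_trans (pow_dvd_pow _ hmn) (h n)
      have := dvd_add h1 ih
      simpa using this
  have inst := (inferInstance : IsAdicComplete (IsLocalRing.maximalIdeal ℤ_[p]) ℤ_[p])
  have hcau : ∀ {m n}, m ≤ n → f m ≡ f n
      [SMOD ((IsLocalRing.maximalIdeal ℤ_[p]) ^ m • ⊤ : Submodule ℤ_[p] ℤ_[p])] := by
    intro m n hmn
    rw [← pdvd_iff_smod]
    exact dvd_sub_comm.mp (htel m n hmn)
  obtain ⟨L, hL⟩ := inst.toIsPrecomplete.prec (f := f) hcau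
  refine ⟨L, fun n => ?_⟩
  have h2 := (pdvd_iff_smod (f n) L n).mpr (hL n)
  exact dvd_sub_comm.mp h2
variable {p : ℕ} [Fact p.Prime]

private lemma ps_p_pow_eq (n : ℕ) :
    ((p : PowerSeries ℤ_[p])) ^ n = C ((p : ℤ_[p]) ^ n) := by
  rw [map_pow, map_natCast]

private lemma ps_pdvd_iff (F : PowerSeries ℤ_[p]) (n : ℕ) :
    (p : PowerSeries ℤ_[p]) ^ n ∣ F ↔
      ∀ k, (p : ℤ_[p]) ^ n ∣ coeff k F := by
  constructor
  · rintro ⟨G, rfl⟩ k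
    rw [ps_p_pow_eq, coeff_C_mul]
    exact Dvd.intro _ rfl
  · intro h
    refine ⟨mk fun k => (h k).choose, ?_⟩
    ext k
    rw [ps_p_pow_eq, coeff_C_mul, coeff_mk]
    exact (h k).choose_spec

private lemma ps_haus {F : PowerSeries ℤ_[p]}
    (h : ∀ n, (p : PowerSeries ℤ_[p]) ^ n ∣ F) : F = 0 := by
  ext k
  rw [map_zero]
  exact padic_haus fun n => ((ps_pdvd_iff F n).mp (h n)) k

private lemma ps_prec (f : ℕ → PowerSeries ℤ_[p])
    (h : ∀ n, (p : PowerSeries ℤ_[p]) ^ n ∣ f (n + 1) - f n) :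
    ∃ L, ∀ n, (p : PowerSeries ℤ_[p]) ^ n ∣ L - f n := by
  have hk : ∀ k : ℕ, ∃ l : ℤ_[p], ∀ n, (p : ℤ_[p]) ^ n ∣ l - coeff k (f n) := by
    intro k
    refine padic_prec (fun n => coeff k (f n)) fun n => ?_
    have := ((ps_pdvd_iff _ n).mp (h n)) k
    simpa [map_sub] using this
  choose l hl using hk
  refine ⟨mk l, fun n => ?_⟩
  rw [ps_pdvd_iff]
  intro k
  simpa [map_sub, coeff_mk] using hl k n

private lemma ps_division (G : PowerSeries ℤ_[p]) (d : ℕ)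
    (hu : IsUnit (coeff d G))
    (hlow : ∀ i < d, (p : ℤ_[p]) ∣ coeff i G) (f : PowerSeries ℤ_[p]) :
    ∃ q r : PowerSeries ℤ_[p],
      (∀ i, d ≤ i → coeff i r = 0) ∧ f = q * G + r := by
  set sh : PowerSeries ℤ_[p] → PowerSeries ℤ_[p] :=
    fun u => mk fun k => coeff (k + d) u with hsh
  set low : PowerSeries ℤ_[p] → PowerSeries ℤ_[p] :=
    fun u => mk fun k => if k < d then coeff k u else 0 with hlowdef
  have hcoefflow : ∀ (u : PowerSeries ℤ_[p]) (k : ℕ),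
      coeff k (low u) = if k < d then coeff k u else 0 := by
    intro u k; simp [hlowdef, coeff_mk]
  have split : ∀ u : PowerSeries ℤ_[p], u = low u + X ^ d * sh u := by
    intro u
    ext k
    rw [map_add, hcoefflow, coeff_X_pow_mul']
    by_cases hkd : k < d
    · simp [hkd, not_le.mpr hkd]
    · have hdk : d ≤ k := not_lt.mp hkd
      simp only [if_neg hkd, if_pos hdk, zero_add, hsh, coeff_mk]
      rw [Nat.sub_add_cancel hdk]
  have hHunit : IsUnit (sh G) := by
    rw [isUnit_iff_constantCoeff]
    simpa [hsh, constantCoeff_mk] using hu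
  obtain ⟨U, hU⟩ := hHunit
  set Hinv : PowerSeries ℤ_[p] := ↑U⁻¹ with hHinv
  have hUH : Hinv * sh G = 1 := by rw [hHinv, ← hU]; exact U.inv_mul
  have hlowG : (p : PowerSeries ℤ_[p]) ∣ low G := by
    have h1 : (p : PowerSeries ℤ_[p]) ^ 1 ∣ low G := by
      refine (ps_pdvd_iff (low G) 1).mpr fun k => ?_
      rw [pow_one, hcoefflow]
      by_cases hkd : k < d
      · simpa [hkd] using hlow k hkd
      · simp [hkd]
    simpa using h1
  obtain ⟨W, hW⟩ := hlowG
  have key : ∀ u : PowerSeries ℤ_[p],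
      u = (Hinv * sh u) * G + (p : PowerSeries ℤ_[p]) * (-(Hinv * W * sh u))
        + low u := by
    intro u
    have h1 := split u
    have h2 := split G
    linear_combination h1 - (Hinv * sh u) * h2 - (Hinv * sh u) * hW -
      (X ^ d * sh u) * hUH
  set F : ℕ → PowerSeries ℤ_[p] :=
    fun n => (fun u => -(Hinv * W * sh u))^[n] f with hF
  have hFsucc : ∀ n, F (n + 1) = -(Hinv * W * sh (F n)) := fun n =>
    Function.iterate_succ_apply' _ n f
  set QN : ℕ → PowerSeries ℤ_[p] :=
    fun n => ∑ i ∈ Finset.range n, (p : PowerSeries ℤ_[p]) ^ i * (Hinv * sh (F i))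
    with hQN
  set RN : ℕ → PowerSeries ℤ_[p] :=
    fun n => ∑ i ∈ Finset.range n, (p : PowerSeries ℤ_[p]) ^ i * low (F i) with hRN
  have hq : ∀ n, QN (n + 1) = QN n + (p : PowerSeries ℤ_[p]) ^ n * (Hinv * sh (F n)) :=
    fun n => Finset.sum_range_succ _ n
  have hr : ∀ n, RN (n + 1) = RN n + (p : PowerSeries ℤ_[p]) ^ n * low (F n) :=
    fun n => Finset.sum_range_succ _ n
  have inv : ∀ n, f = QN n * G + RN n + (p : PowerSeries ℤ_[p]) ^ n * F n := by
    intro n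
    induction n with
    | zero => simp [hQN, hRN, hF]
    | succ n ih =>
      rw [hFsucc n, hq n, hr n]
      have hk := key (F n)
      linear_combination ih + ((p : PowerSeries ℤ_[p]) ^ n) * hk
  obtain ⟨Q, hQ⟩ := ps_prec QN fun n => by
    have h3 : QN (n + 1) - QN n
        = (p : PowerSeries ℤ_[p]) ^ n * (Hinv * sh (F n)) := by
      rw [hq n]; ring
    rw [h3]; exact Dvd.intro _ rfl
  obtain ⟨R, hR⟩ := ps_prec RN fun n => by
    have h3 : RN (n + 1) - RN n = (p : PowerSeries ℤ_[p]) ^ n * low (F n) := by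
      rw [hr n]; ring
    rw [h3]; exact Dvd.intro _ rfl
  refine ⟨Q, R, ?_, ?_⟩
  · intro i hdi
    refine padic_haus fun n => ?_
    have h1 := ((ps_pdvd_iff _ n).mp (hR n)) i
    have h2 : coeff i (RN n) = 0 := by
      rw [hRN]
      simp only [map_sum]
      refine Finset.sum_eq_zero fun j _ => ?_
      rw [ps_p_pow_eq, coeff_C_mul, hcoefflow, if_neg (not_lt.mpr hdi), mul_zero]
    rw [map_sub, h2, sub_zero] at h1
    exact h1
  · have hz : ∀ n, (p : PowerSeries ℤ_[p]) ^ n ∣ f - (Q * G + R) := by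
      intro n
      have h4 : f - (Q * G + R) = ((QN n - Q)) * G + (RN n - R)
          + (p : PowerSeries ℤ_[p]) ^ n * F n := by
        linear_combination inv n
      rw [h4]
      have d1 : (p : PowerSeries ℤ_[p]) ^ n ∣ QN n - Q :=
        dvd_sub_comm.mp (hQ n)
      have d2 : (p : PowerSeries ℤ_[p]) ^ n ∣ RN n - R :=
        dvd_sub_comm.mp (hR n)
      exact dvd_add (dvd_add (d1.mul_right G) d2) (Dvd.intro _ rfl)
    have h5 := ps_haus hz
    linear_combination h5


private lemma module_smul_mem_span (M : Type*) [AddCommGroup M]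
    [Module (PowerSeries ℤ_[p]) M] [Module ℤ_[p] M]
    [IsScalarTower ℤ_[p] (PowerSeries ℤ_[p]) M]
    (G : PowerSeries ℤ_[p]) (d : ℕ) (hu : IsUnit (coeff d G))
    (hlow : ∀ i < d, (p : ℤ_[p]) ∣ coeff i G)
    (y : M) (hGy : G • y = 0) (c : PowerSeries ℤ_[p]) :
    c • y ∈ Submodule.span ℤ_[p]
      ((fun i : ℕ => ((X : PowerSeries ℤ_[p]) ^ i) • y) '' Set.Iio d) := by
  obtain ⟨q, r, hr, hc⟩ := ps_division G d hu hlow c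
  have hCsmul : ∀ (a : ℤ_[p]) (z : M), (C a) • z = a • z := by
    intro a z
    rw [← algebraMap_smul (PowerSeries ℤ_[p]) a z]
    congr 1
  have hrpoly : r = ∑ i ∈ Finset.range d, C (coeff i r) * X ^ i := by
    ext k
    rw [map_sum]
    have : ∀ i ∈ Finset.range d,
        coeff k (C (coeff i r) * X ^ i)
          = if k = i then coeff i r else 0 := by
      intro i _
      rw [coeff_C_mul, coeff_X_pow]
      split_ifs <;> simp
    rw [Finset.sum_congr rfl this, Finset.sum_ite_eq]
    by_cases hk : k < d
    · rw [if_pos (Finset.mem_range.mpr hk)]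
    · rw [if_neg (fun hmem => hk (Finset.mem_range.mp hmem))]
      exact hr k (not_lt.mp hk)
  have hcy : c • y = r • y := by
    rw [hc, add_smul, mul_smul, hGy, smul_zero, zero_add]
  rw [hcy, hrpoly, Finset.sum_smul]
  refine Submodule.sum_mem _ fun i hi => ?_
  rw [mul_smul, hCsmul]
  refine Submodule.smul_mem _ _ (Submodule.subset_span ?_)
  exact ⟨i, Finset.mem_range.mp hi, rfl⟩


/-- A finitely generated torsion `Λ`-module with trivial `p`-torsion is a free
`ℤ_p`-module of finite rank. -/
theorem free_zp_of_no_p_torsion (p : ℕ) [Fact p.Prime] (hp : Odd p)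
    (X : Type) [AddCommGroup X] [Module (IwasawaAlgebra p) X]
    [Module ℤ_[p] X] [IsScalarTower ℤ_[p] (IwasawaAlgebra p) X]
    [Module.Finite (IwasawaAlgebra p) X]
    (htors : Module.IsTorsion (IwasawaAlgebra p) X)
    (hptors : ∀ x : X, (p : IwasawaAlgebra p) • x = 0 → x = 0) :
    Module.Free ℤ_[p] X ∧ Module.Finite ℤ_[p] X := by
  classical
  -- injectivity of powers of p
  have pinj : ∀ (m : ℕ) (y : X), (p : IwasawaAlgebra p) ^ m • y = 0 → y = 0 := by
    intro m
    induction m with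
    | zero => intro y hy; simpa using hy
    | succ m ih =>
      intro y hy
      rw [pow_succ, mul_smul] at hy
      exact hptors y (ih _ hy)
  -- a nonzero annihilator
  obtain ⟨s, hs⟩ := Module.finite_def.mp ‹Module.Finite (IwasawaAlgebra p) X›
  choose a ha using fun x : X => @htors x
  have hFmem : (∏ y ∈ s, (a y : IwasawaAlgebra p)) ∈
      nonZeroDivisors (IwasawaAlgebra p) :=
    Submonoid.prod_mem _ fun y _ => (a y).2
  set F : IwasawaAlgebra p := ∏ y ∈ s, (a y : IwasawaAlgebra p) with hFdef
  have hF0 : F ≠ 0 := nonZeroDivisors.ne_zero hFmem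
  have hFann : ∀ x : X, F • x = 0 := by
    intro x
    have hx : x ∈ Submodule.span (IwasawaAlgebra p) (s : Set X) := by
      rw [hs]; trivial
    induction hx using Submodule.span_induction with
    | mem y hy =>
      have hfac : (∏ z ∈ s.erase y, (a z : IwasawaAlgebra p))
          * (a y : IwasawaAlgebra p) = F := by
        rw [hFdef, mul_comm]
        exact Finset.mul_prod_erase s _ hy
      rw [← hfac, mul_smul]
      have : (a y : IwasawaAlgebra p) • y = 0 := ha y
      rw [this, smul_zero]
    | zero => rw [smul_zero]
    | add x y hx hy ihx ihy => rw [smul_add, ihx, ihy, add_zero]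
    | smul c x hx ihx => rw [smul_comm, ihx, smul_zero]
  -- strip powers of p
  have hex : ∃ n, ¬ (p : IwasawaAlgebra p) ^ n ∣ F := by
    by_contra h
    push_neg at h
    exact hF0 (ps_haus h)
  set n := Nat.find hex with hn
  have hnspec : ¬ (p : IwasawaAlgebra p) ^ n ∣ F := Nat.find_spec hex
  have hn0 : n ≠ 0 := by
    intro h0
    rw [h0, pow_zero] at hnspec
    exact hnspec (one_dvd F)
  have hdvd : (p : IwasawaAlgebra p) ^ (n - 1) ∣ F := by
    have := Nat.find_min hex (m := n - 1)
      (Nat.sub_lt (Nat.pos_of_ne_zero hn0) one_pos)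
    exact not_not.mp this
  obtain ⟨G, hG⟩ := hdvd
  have hpG : ¬ (p : IwasawaAlgebra p) ∣ G := by
    rintro ⟨G', rfl⟩
    refine hnspec ⟨G', ?_⟩
    rw [hG, ← mul_assoc, ← pow_succ, Nat.sub_add_cancel (Nat.one_le_iff_ne_zero.mpr hn0)]
  have hGann : ∀ x : X, G • x = 0 := by
    intro x
    have := hFann x
    rw [hG, mul_smul] at this
    exact pinj _ _ this
  -- find the degree d
  have hexd : ∃ k, ¬ (p : ℤ_[p]) ∣ coeff k G := by
    by_contra h
    push_neg at h
    refine hpG ?_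
    have := (ps_pdvd_iff G 1).mpr fun k => by simpa using h k
    simpa using this
  set d := Nat.find hexd with hd
  have hdspec : ¬ (p : ℤ_[p]) ∣ coeff d G := Nat.find_spec hexd
  have hu : IsUnit (coeff d G) := by
    by_contra hnu
    refine hdspec ?_
    have hmem : coeff d G ∈ IsLocalRing.maximalIdeal ℤ_[p] :=
      (IsLocalRing.mem_maximalIdeal _).mpr hnu
    rwa [PadicInt.maximalIdeal_eq_span_p, Ideal.mem_span_singleton] at hmem
  have hlow : ∀ i < d, (p : ℤ_[p]) ∣ coeff i G := fun i hi =>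
    not_not.mp (Nat.find_min hexd hi)
  -- finiteness over ℤ_p
  have hfin : Module.Finite ℤ_[p] X := by
    set T : Finset X := s.biUnion fun y =>
      (Finset.range d).image fun i => ((PowerSeries.X : IwasawaAlgebra p) ^ i) • y with hT
    refine ⟨⟨T, ?_⟩⟩
    rw [eq_top_iff]
    intro x _
    have hx : x ∈ Submodule.span (IwasawaAlgebra p) (s : Set X) := by
      rw [hs]; trivial
    obtain ⟨c, _, hc⟩ := Submodule.mem_span_finset.mp hx
    rw [← hc]
    refine Submodule.sum_mem _ fun y hy => ?_
    have hmem := module_smul_mem_span X G d hu hlow y (hGann y) (c y)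
    refine Submodule.span_le.mpr ?_ hmem
    rintro z ⟨i, hi, rfl⟩
    refine Submodule.subset_span ?_
    simp only [hT, Finset.coe_biUnion, Set.mem_iUnion, Finset.coe_image,
      Set.mem_image, Finset.mem_coe, Finset.mem_range]
    exact ⟨y, hy, i, Set.mem_Iio.mp hi, rfl⟩
  -- torsion-freeness over ℤ_p
  have hnz : NoZeroSMulDivisors ℤ_[p] X := by
    refine ⟨fun {c x} hcx => ?_⟩
    by_cases hc : c = 0
    · exact Or.inl hc
    · refine Or.inr ?_
      have hspec := PadicInt.unitCoeff_spec hc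
      have h1 : ((p : ℤ_[p]) ^ c.valuation) • x = 0 := by
        have h0 := congrArg
          (fun z : X => ((((PadicInt.unitCoeff hc)⁻¹ : ℤ_[p]ˣ) : ℤ_[p])) • z) hcx
        simp only [smul_smul, smul_zero] at h0
        have hprod := congrArg
          (fun z : ℤ_[p] => ((((PadicInt.unitCoeff hc)⁻¹ : ℤ_[p]ˣ) : ℤ_[p])) * z) hspec
        beta_reduce at hprod
        rw [← mul_assoc, Units.inv_mul, one_mul] at hprod
        rwa [hprod] at h0
      have h2 : ((p : IwasawaAlgebra p) ^ c.valuation) • x = 0 := by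
        rw [← algebraMap_smul (IwasawaAlgebra p)
          ((p : ℤ_[p]) ^ c.valuation) x] at h1
        rw [← h1]
        congr 1
        rw [map_pow, map_natCast]
      exact pinj _ _ h2
  have htf : Module.IsTorsionFree ℤ_[p] X :=
    Module.IsTorsionFree.of_smul_eq_zero fun r m h => hnz.eq_zero_or_eq_zero_of_smul_eq_zero h
  exact ⟨Module.free_of_finite_type_torsion_free', hfin⟩
end

section
/- For every real number q with 0 < q < 1, one has the identity 1 + Σ_{j=1}^∞ q^{j²} / ∏_{k=1}^j (1 − q^k)² = ∏_{i=1}^∞ (1 − q^i)^{−1}, where the series on the left converges and the infinite product on the right converges to a nonzero real number. -/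
open Finset Filter Topology

noncomputable def Pq (q : ℝ) (n : ℕ) : ℝ := ∏ k ∈ Finset.range n, (1 - q ^ (k + 1))

noncomputable def Cq (q : ℝ) (n j : ℕ) : ℝ :=
  if j ≤ n then Pq q n / (Pq q j * Pq q (n - j)) else 0

lemma Pq_pos (q : ℝ) (h0 : 0 < q) (h1 : q < 1) (n : ℕ) : 0 < Pq q n := by
  apply Finset.prod_pos
  intro k _
  have : q ^ (k + 1) < 1 := pow_lt_one₀ h0.le h1 (Nat.succ_ne_zero k)
  linarith

lemma Pq_le_one (q : ℝ) (h0 : 0 < q) (h1 : q < 1) (n : ℕ) : Pq q n ≤ 1 := by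
  apply Finset.prod_le_one
  · intro k _
    have : q ^ (k + 1) < 1 := pow_lt_one₀ h0.le h1 (Nat.succ_ne_zero k)
    linarith
  · intro k _
    have : 0 < q ^ (k + 1) := pow_pos h0 _
    linarith

lemma Pq_succ (q : ℝ) (n : ℕ) : Pq q (n + 1) = Pq q n * (1 - q ^ (n + 1)) :=
  Finset.prod_range_succ _ _

lemma Pq_anti (q : ℝ) (h0 : 0 < q) (h1 : q < 1) {a b : ℕ} (h : a ≤ b) :
    Pq q b ≤ Pq q a := by
  induction b with
  | zero => simpa [Nat.le_zero.mp h]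
  | succ b ih =>
    rcases Nat.eq_or_lt_of_le h with rfl | h'
    · rfl
    · have hb := ih (Nat.lt_succ_iff.mp h')
      have hp := Pq_pos q h0 h1 b
      have : q ^ (b + 1) < 1 := pow_lt_one₀ h0.le h1 (Nat.succ_ne_zero b)
      have hq : 0 < q ^ (b + 1) := pow_pos h0 _
      rw [Pq_succ]
      nlinarith

lemma one_sub_pow_ne (q : ℝ) (h0 : 0 < q) (h1 : q < 1) (n : ℕ) : (1 : ℝ) - q ^ (n + 1) ≠ 0 := by
  have : q ^ (n + 1) < 1 := pow_lt_one₀ h0.le h1 (Nat.succ_ne_zero n)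
  linarith

lemma pascal (q : ℝ) (h0 : 0 < q) (h1 : q < 1) (n j : ℕ) (hj : j ≤ n) :
    Cq q (n + 1) (j + 1) = Cq q n (j + 1) + q ^ (n - j) * Cq q n j := by
  obtain ⟨k, rfl⟩ : ∃ k, n = j + k := ⟨n - j, by omega⟩
  have hsub : j + k - j = k := by omega
  rcases Nat.eq_zero_or_pos k with rfl | hk
  · simp only [Cq, Nat.add_zero] at *
    rw [if_pos (by omega), if_neg (by omega), if_pos (le_refl j)]
    have h1' := (Pq_pos q h0 h1 (j + 1)).ne'
    have h0' := (Pq_pos q h0 h1 j).ne'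
    have hp0 : Pq q 0 = 1 := by simp [Pq]
    simp [hsub, hp0, div_self h1', div_self h0']
  · obtain ⟨k', rfl⟩ : ∃ k', k = k' + 1 := ⟨k - 1, by omega⟩
    simp only [Cq]
    rw [if_pos (by omega), if_pos (by omega), if_pos (by omega)]
    have e1 : j + (k' + 1) + 1 - (j + 1) = k' + 1 := by omega
    have e2 : j + (k' + 1) - (j + 1) = k' := by omega
    have e3 : j + (k' + 1) - j = k' + 1 := by omega
    rw [e1, e2, e3]
    have hP1 : Pq q (j + (k' + 1) + 1) = Pq q (j + (k' + 1)) * (1 - q ^ (j + k' + 2)) := by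
      have := Pq_succ q (j + (k' + 1)); simpa [show j + (k' + 1) + 1 = j + k' + 2 by omega] using this
    have hP2 : Pq q (k' + 1) = Pq q k' * (1 - q ^ (k' + 1)) := Pq_succ q k'
    have hP3 : Pq q (j + 1) = Pq q j * (1 - q ^ (j + 1)) := Pq_succ q j
    have hq : q ^ (k' + 1) * q ^ (j + 1) = q ^ (j + k' + 2) := by
      rw [← pow_add]; congr 1; omega
    have n1 := (Pq_pos q h0 h1 (j + (k' + 1))).ne'
    have n2 := (Pq_pos q h0 h1 j).ne'
    have n3 := (Pq_pos q h0 h1 k').ne'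
    have n4 := one_sub_pow_ne q h0 h1 (j + k' + 1)
    have n5 := one_sub_pow_ne q h0 h1 k'
    have n6 := one_sub_pow_ne q h0 h1 j
    rw [hP1, hP2, hP3]
    field_simp
    linear_combination (Pq q (j + (k' + 1)) * Pq q j ^ 2 * Pq q k' ^ 2 *
      (1 - q ^ (j + 1)) * (1 - q ^ (k' + 1))) * hq

lemma Cq_zero (q : ℝ) (h0 : 0 < q) (h1 : q < 1) (n : ℕ) : Cq q n 0 = 1 := by
  have hp0 : Pq q 0 = 1 := by simp [Pq]
  rw [Cq, if_pos (Nat.zero_le n), hp0, Nat.sub_zero, one_mul,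
    div_self (Pq_pos q h0 h1 n).ne']

lemma Tid (q : ℝ) (h0 : 0 < q) (h1 : q < 1) :
    ∀ n m : ℕ, ∑ j ∈ Finset.range (n + 1),
        q ^ (j * (j + m)) * Cq q n j / Pq q (j + m) = (Pq q (n + m))⁻¹ := by
  intro n
  induction n with
  | zero =>
    intro m
    simp only [Finset.sum_range_one, Cq_zero q h0 h1, Nat.zero_mul, pow_zero, one_mul,
      Nat.zero_add, mul_one, one_div]
  | succ n ih =>
    intro m
    rw [Finset.sum_range_succ']
    have key : ∀ i ∈ Finset.range (n + 1),
        q ^ ((i + 1) * ((i + 1) + m)) * Cq q (n + 1) (i + 1) / Pq q ((i + 1) + m)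
          = q ^ ((i + 1) * ((i + 1) + m)) * Cq q n (i + 1) / Pq q ((i + 1) + m)
            + q ^ (n + m + 1) * (q ^ (i * (i + (m + 1))) * Cq q n i / Pq q (i + (m + 1))) := by
      intro i hi
      have hi' : i ≤ n := by simpa using Nat.lt_succ_iff.mp (Finset.mem_range.mp hi)
      rw [pascal q h0 h1 n i hi']
      have hexp : q ^ ((i + 1) * (i + (m + 1))) * q ^ (n - i)
          = q ^ (n + m + 1) * q ^ (i * (i + (m + 1))) := by
        rw [← pow_add, ← pow_add]
        congr 1
        obtain ⟨t, rfl⟩ : ∃ t, n = i + t := ⟨n - i, by omega⟩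
        rw [Nat.add_sub_cancel_left]
        ring
      have hP : ((i + 1) + m) = (i + (m + 1)) := by omega
      rw [hP, mul_add, add_div]
      congr 1
      rw [show q ^ ((i + 1) * (i + (m + 1))) * (q ^ (n - i) * Cq q n i)
          = q ^ ((i + 1) * (i + (m + 1))) * q ^ (n - i) * Cq q n i by ring, hexp]
      ring
    rw [Finset.sum_congr rfl key, Finset.sum_add_distrib, ← Finset.mul_sum, ih (m + 1)]
    have hlast : q ^ ((n + 1) * ((n + 1) + m)) * Cq q n (n + 1) / Pq q ((n + 1) + m) = 0 := by
      rw [Cq, if_neg (by omega)]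
      simp
    have hfirst : q ^ (0 * (0 + m)) * Cq q (n + 1) 0 / Pq q (0 + m)
        = q ^ (0 * (0 + m)) * Cq q n 0 / Pq q (0 + m) := by
      rw [Cq_zero q h0 h1, Cq_zero q h0 h1]
    rw [hfirst]
    have hT : (∑ i ∈ Finset.range (n + 1),
          q ^ ((i + 1) * ((i + 1) + m)) * Cq q n (i + 1) / Pq q ((i + 1) + m))
          + q ^ (0 * (0 + m)) * Cq q n 0 / Pq q (0 + m)
        = ∑ j ∈ Finset.range (n + 1), q ^ (j * (j + m)) * Cq q n j / Pq q (j + m) := by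
      rw [Finset.sum_range_succ, hlast, add_zero,
        Finset.sum_range_succ' (fun j => q ^ (j * (j + m)) * Cq q n j / Pq q (j + m)) n]
    rw [add_right_comm, hT, ih m]
    have e1 : n + 1 + m = (n + m) + 1 := by omega
    have e2 : n + (m + 1) = (n + m) + 1 := by omega
    rw [e1, e2, Pq_succ]
    have n1 := (Pq_pos q h0 h1 (n + m)).ne'
    have n2 := one_sub_pow_ne q h0 h1 (n + m)
    field_simp
    ring

lemma summable_log_q (q : ℝ) (h0 : 0 < q) (h1 : q < 1) :
    Summable fun n : ℕ => Real.log (1 - q ^ (n + 1)) := by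
  apply Summable.of_abs
  have hgeo : Summable fun n : ℕ => q ^ (n + 1) * (1 - q)⁻¹ := by
    apply Summable.mul_right
    exact (summable_geometric_of_lt_one h0.le h1).comp_injective (add_left_injective 1)
  apply Summable.of_nonneg_of_le (fun n => abs_nonneg _) _ hgeo
  intro n
  have hq1 : q ^ (n + 1) ≤ q := by
    calc q ^ (n + 1) ≤ q ^ 1 := pow_le_pow_of_le_one h0.le h1.le (by omega)
    _ = q := pow_one q
  have hx : 0 < 1 - q ^ (n + 1) := by
    have : q ^ (n + 1) < 1 := pow_lt_one₀ h0.le h1 (Nat.succ_ne_zero n)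
    linarith
  have hlogle : Real.log ((1 - q ^ (n + 1))⁻¹) ≤ (1 - q ^ (n + 1))⁻¹ - 1 :=
    Real.log_le_sub_one_of_pos (by positivity)
  have habs : |Real.log (1 - q ^ (n + 1))| = Real.log ((1 - q ^ (n + 1))⁻¹) := by
    rw [Real.log_inv, abs_of_nonpos]
    exact Real.log_nonpos hx.le (by nlinarith [pow_pos h0 (n + 1)])
  rw [habs]
  have hinv : (1 - q ^ (n + 1))⁻¹ - 1 = q ^ (n + 1) / (1 - q ^ (n + 1)) := by
    field_simp
    ring
  have hle2 : q ^ (n + 1) / (1 - q ^ (n + 1)) ≤ q ^ (n + 1) * (1 - q)⁻¹ := by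
    rw [div_eq_mul_inv]
    apply mul_le_mul_of_nonneg_left _ (pow_pos h0 _).le
    apply inv_anti₀ (by linarith)
    linarith
  linarith

lemma multipliable_q (q : ℝ) (h0 : 0 < q) (h1 : q < 1) :
    Multipliable fun i : ℕ => 1 - q ^ (i + 1) := by
  have := Real.multipliable_of_summable_log (f := fun n : ℕ => 1 - q ^ (n + 1))
    (fun n => by
      show (0:ℝ) < 1 - q ^ (n + 1)
      have : q ^ (n + 1) < 1 := pow_lt_one₀ h0.le h1 (Nat.succ_ne_zero n)
      linarith)
    (summable_log_q q h0 h1)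
  exact this

lemma tprod_q_pos (q : ℝ) (h0 : 0 < q) (h1 : q < 1) :
    0 < ∏' i : ℕ, (1 - q ^ (i + 1)) := by
  have hfn : ∀ (_ : Unit) (n : ℕ), 0 < (fun (n : ℕ) (_ : Unit) => 1 - q ^ (n + 1)) n () := fun _ n => by
    show (0:ℝ) < 1 - q ^ (n + 1)
    have : q ^ (n + 1) < 1 := pow_lt_one₀ h0.le h1 (Nat.succ_ne_zero n)
    linarith
  have h2 := Real.rexp_tsum_eq_tprod (f := fun n : ℕ => 1 - q ^ (n + 1)) (fun n => hfn () n)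
    (summable_log_q q h0 h1)
  rw [← h2]
  exact Real.exp_pos _

lemma tendsto_Pq (q : ℝ) (h0 : 0 < q) (h1 : q < 1) :
    Tendsto (Pq q) atTop (𝓝 (∏' i : ℕ, (1 - q ^ (i + 1)))) :=
  (multipliable_q q h0 h1).hasProd.tendsto_prod_nat

lemma weier (q : ℝ) (h0 : 0 < q) (h1 : q < 1) (s : Finset ℕ) :
    1 - ∑ k ∈ s, q ^ (k + 1) ≤ ∏ k ∈ s, (1 - q ^ (k + 1)) := by
  induction s using Finset.induction_on with
  | empty => simp
  | @insert a s ha ih =>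
    rw [Finset.sum_insert ha, Finset.prod_insert ha]
    have h1a : q ^ (a + 1) < 1 := pow_lt_one₀ h0.le h1 (Nat.succ_ne_zero a)
    have h0a : 0 < q ^ (a + 1) := pow_pos h0 _
    have hple : ∏ k ∈ s, (1 - q ^ (k + 1)) ≤ 1 := by
      apply Finset.prod_le_one
      · intro k _
        have : q ^ (k + 1) < 1 := pow_lt_one₀ h0.le h1 (Nat.succ_ne_zero k)
        linarith
      · intro k _
        have : 0 < q ^ (k + 1) := pow_pos h0 _
        linarith
    nlinarith

lemma geom_tail (q : ℝ) (h0 : 0 < q) (h1 : q < 1) (a b : ℕ) :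
    ∑ k ∈ Finset.Ico a b, q ^ (k + 1) ≤ q ^ (a + 1) * (1 - q)⁻¹ := by
  rw [Finset.sum_Ico_eq_sum_range]
  have : ∀ i ∈ Finset.range (b - a), q ^ (a + i + 1) = q ^ (a + 1) * q ^ i := by
    intro i _
    rw [← pow_add]
    congr 1
    omega
  rw [Finset.sum_congr rfl this, ← Finset.mul_sum]
  apply mul_le_mul_of_nonneg_left _ (pow_pos h0 _).le
  have hne : q ≠ 1 := h1.ne
  rw [geom_sum_eq hne]
  have hq : 0 < 1 - q := by linarith
  rw [show (q ^ (b - a) - 1) / (q - 1) = (1 - q ^ (b - a)) / (1 - q) by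
    rw [div_eq_div_iff (by linarith) (by linarith)]; ring]
  rw [← one_div]
  apply div_le_div₀ zero_le_one _ hq le_rfl
  have : 0 ≤ q ^ (b - a) := (pow_pos h0 _).le
  linarith

lemma Pq_gap (q : ℝ) (h0 : 0 < q) (h1 : q < 1) {a b : ℕ} (h : a ≤ b) :
    Pq q a - Pq q b ≤ q ^ (a + 1) * (1 - q)⁻¹ := by
  have hsplit : Pq q b = Pq q a * ∏ k ∈ Finset.Ico a b, (1 - q ^ (k + 1)) := by
    rw [Pq, Pq, Finset.range_eq_Ico,
      ← Finset.prod_Ico_consecutive _ (Nat.zero_le a) h]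
    rw [Finset.range_eq_Ico]
  have hw := weier q h0 h1 (Finset.Ico a b)
  have hg := geom_tail q h0 h1 a b
  have hp1 : Pq q a ≤ 1 := Pq_le_one q h0 h1 a
  have hp0 : 0 < Pq q a := Pq_pos q h0 h1 a
  have hple : ∏ k ∈ Finset.Ico a b, (1 - q ^ (k + 1)) ≤ 1 := by
    apply Finset.prod_le_one
    · intro k _
      have : q ^ (k + 1) < 1 := pow_lt_one₀ h0.le h1 (Nat.succ_ne_zero k)
      linarith
    · intro k _
      have : 0 < q ^ (k + 1) := pow_pos h0 _
      linarith
  have hsum0 : 0 ≤ ∑ k ∈ Finset.Ico a b, q ^ (k + 1) :=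
    Finset.sum_nonneg fun k _ => (pow_pos h0 _).le
  rw [hsplit]
  nlinarith

/-- For `0 < q < 1`,
`1 + Σ_{j=1}^∞ q^{j²} / ∏_{k=1}^j (1 − q^k)² = ∏_{i=1}^∞ (1 − q^i)⁻¹`,
the series converging and the infinite product converging to a nonzero real number. -/
theorem sum_q_sq_div_prod_eq_inv_prod (q : ℝ) (h0 : 0 < q) (h1 : q < 1) :
    Summable (fun j : ℕ =>
        q ^ ((j + 1) ^ 2) / (∏ k ∈ Finset.range (j + 1), (1 - q ^ (k + 1))) ^ 2) ∧
      Multipliable (fun i : ℕ => 1 - q ^ (i + 1)) ∧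
      (∏' i : ℕ, (1 - q ^ (i + 1))) ≠ 0 ∧
      1 + ∑' j : ℕ, q ^ ((j + 1) ^ 2) / (∏ k ∈ Finset.range (j + 1), (1 - q ^ (k + 1))) ^ 2
        = (∏' i : ℕ, (1 - q ^ (i + 1)))⁻¹ := by
  set C : ℝ := ∏' i : ℕ, (1 - q ^ (i + 1)) with hCdef
  have hC : 0 < C := tprod_q_pos q h0 h1
  set a : ℕ → ℝ := fun j => q ^ (j ^ 2) / (Pq q j) ^ 2 with hadef
  have hCle : ∀ n, C ≤ Pq q n := by
    intro n
    apply le_of_tendsto (tendsto_Pq q h0 h1)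
    exact eventually_atTop.2 ⟨n, fun b hb => Pq_anti q h0 h1 hb⟩
  have ha_le : ∀ j, a j ≤ q ^ j * (C ^ 2)⁻¹ := by
    intro j
    show q ^ (j ^ 2) / (Pq q j) ^ 2 ≤ q ^ j * (C ^ 2)⁻¹
    rw [div_eq_mul_inv]
    apply mul_le_mul
    · exact pow_le_pow_of_le_one h0.le h1.le (Nat.le_self_pow two_ne_zero j)
    · apply inv_anti₀ (by positivity)
      exact pow_le_pow_left₀ hC.le (hCle j) 2
    · positivity
    · positivity
  have ha_nonneg : ∀ j, 0 ≤ a j := fun j => by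
    rw [hadef]; positivity
  have hsummable : Summable a := by
    apply Summable.of_nonneg_of_le ha_nonneg ha_le
    exact (summable_geometric_of_lt_one h0.le h1).mul_right _
  -- the partial sums of `a` up to n, compared with the finite Durfee identity
  have hterm : ∀ n, ∀ j ∈ Finset.range (n + 1),
      0 ≤ a j - q ^ (j * j) * Cq q n j / Pq q j ∧
      a j - q ^ (j * j) * Cq q n j / Pq q j
        ≤ q ^ (n + 1) * (1 - q)⁻¹ * (C ^ 3)⁻¹ := by
    intro n j hj
    have hj' : j ≤ n := Nat.lt_succ_iff.mp (Finset.mem_range.mp hj)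
    have hCq : Cq q n j = Pq q n / (Pq q j * Pq q (n - j)) := by rw [Cq, if_pos hj']
    have pj := Pq_pos q h0 h1 j
    have pnj := Pq_pos q h0 h1 (n - j)
    have pn := Pq_pos q h0 h1 n
    have hmono : Pq q n ≤ Pq q (n - j) := Pq_anti q h0 h1 (Nat.sub_le n j)
    have hgap : Pq q (n - j) - Pq q n ≤ q ^ (n - j + 1) * (1 - q)⁻¹ :=
      Pq_gap q h0 h1 (Nat.sub_le n j)
    have hdiff : a j - q ^ (j * j) * Cq q n j / Pq q j
        = q ^ (j ^ 2) * (Pq q (n - j) - Pq q n) / ((Pq q j) ^ 2 * Pq q (n - j)) := by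
      rw [hCq]
      show q ^ (j ^ 2) / (Pq q j) ^ 2
          - q ^ (j * j) * (Pq q n / (Pq q j * Pq q (n - j))) / Pq q j = _
      rw [show j * j = j ^ 2 from (sq j).symm]
      field_simp
    constructor
    · rw [hdiff]
      apply div_nonneg _ (by positivity)
      apply mul_nonneg (by positivity)
      linarith
    · rw [hdiff]
      have hnum : q ^ (j ^ 2) * (Pq q (n - j) - Pq q n)
          ≤ q ^ (j ^ 2) * (q ^ (n - j + 1) * (1 - q)⁻¹) := by
        apply mul_le_mul_of_nonneg_left hgap (by positivity)
      have hqexp : q ^ (j ^ 2) * q ^ (n - j + 1) ≤ q ^ (n + 1) := by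
        rw [← pow_add]
        apply pow_le_pow_of_le_one h0.le h1.le
        have : j ≤ j ^ 2 := Nat.le_self_pow two_ne_zero j
        omega
      have hden : (C ^ 3) ≤ (Pq q j) ^ 2 * Pq q (n - j) := by
        calc C ^ 3 = C ^ 2 * C := by ring
        _ ≤ (Pq q j) ^ 2 * Pq q (n - j) := by
            apply mul_le_mul _ (hCle _) hC.le (by positivity)
            exact pow_le_pow_left₀ hC.le (hCle j) 2
      rw [div_le_iff₀ (by positivity)]
      have h1q : (0:ℝ) < (1 - q)⁻¹ := by
        have : (0:ℝ) < 1 - q := by linarith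
        positivity
      calc q ^ (j ^ 2) * (Pq q (n - j) - Pq q n)
          ≤ q ^ (j ^ 2) * (q ^ (n - j + 1) * (1 - q)⁻¹) := hnum
        _ = q ^ (j ^ 2) * q ^ (n - j + 1) * (1 - q)⁻¹ := by ring
        _ ≤ q ^ (n + 1) * (1 - q)⁻¹ := by
            apply mul_le_mul_of_nonneg_right hqexp h1q.le
        _ = q ^ (n + 1) * (1 - q)⁻¹ * (C ^ 3)⁻¹ * C ^ 3 := by
            rw [mul_assoc (q ^ (n + 1) * (1 - q)⁻¹) (C ^ 3)⁻¹ (C ^ 3),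
              inv_mul_cancel₀ (by positivity : (C ^ 3 : ℝ) ≠ 0), mul_one]
        _ ≤ q ^ (n + 1) * (1 - q)⁻¹ * (C ^ 3)⁻¹ * ((Pq q j) ^ 2 * Pq q (n - j)) := by
            apply mul_le_mul_of_nonneg_left hden (by positivity)
  have hSdiff : ∀ n : ℕ,
      |∑ j ∈ Finset.range (n + 1), a j - (Pq q n)⁻¹|
        ≤ (n + 1 : ℝ) * (q ^ (n + 1) * (1 - q)⁻¹ * (C ^ 3)⁻¹) := by
    intro n
    have hTn := Tid q h0 h1 n 0
    simp only [Nat.add_zero] at hTn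
    rw [← hTn, ← Finset.sum_sub_distrib]
    rw [abs_of_nonneg (Finset.sum_nonneg fun j hj => (hterm n j hj).1)]
    calc ∑ j ∈ Finset.range (n + 1), (a j - q ^ (j * j) * Cq q n j / Pq q j)
        ≤ ∑ _j ∈ Finset.range (n + 1), q ^ (n + 1) * (1 - q)⁻¹ * (C ^ 3)⁻¹ :=
          Finset.sum_le_sum fun j hj => (hterm n j hj).2
      _ = (n + 1 : ℝ) * (q ^ (n + 1) * (1 - q)⁻¹ * (C ^ 3)⁻¹) := by
          rw [Finset.sum_const, Finset.card_range]
          push_cast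
          ring
  -- limits
  have hlim1 : Tendsto (fun n => ∑ j ∈ Finset.range (n + 1), a j) atTop (𝓝 (∑' j, a j)) :=
    hsummable.hasSum.tendsto_sum_nat.comp (tendsto_add_atTop_nat 1)
  have hlim2 : Tendsto (fun n => (Pq q n)⁻¹) atTop (𝓝 C⁻¹) :=
    (tendsto_Pq q h0 h1).inv₀ hC.ne'
  have hlim3 : Tendsto (fun n : ℕ => (n + 1 : ℝ) * (q ^ (n + 1) * (1 - q)⁻¹ * (C ^ 3)⁻¹))
      atTop (𝓝 0) := by
    have hbase : Tendsto (fun n : ℕ => (n : ℝ) * q ^ n) atTop (𝓝 0) :=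
      tendsto_self_mul_const_pow_of_lt_one h0.le h1
    have hshift : Tendsto (fun n : ℕ => ((n + 1 : ℕ) : ℝ) * q ^ (n + 1)) atTop (𝓝 0) :=
      hbase.comp (tendsto_add_atTop_nat 1)
    have := hshift.mul_const ((1 - q)⁻¹ * (C ^ 3)⁻¹)
    rw [zero_mul] at this
    apply this.congr
    intro n
    push_cast
    ring
  have hdiff0 : Tendsto (fun n => ∑ j ∈ Finset.range (n + 1), a j - (Pq q n)⁻¹) atTop (𝓝 0) :=
    squeeze_zero_norm hSdiff hlim3
  have hsum_to_Cinv : Tendsto (fun n => ∑ j ∈ Finset.range (n + 1), a j) atTop (𝓝 C⁻¹) := by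
    have := hdiff0.add hlim2
    rw [zero_add] at this
    apply this.congr
    intro n
    ring
  have htsum : ∑' j, a j = C⁻¹ := tendsto_nhds_unique hlim1 hsum_to_Cinv
  -- assembly
  have hfun : (fun j : ℕ =>
      q ^ ((j + 1) ^ 2) / (∏ k ∈ Finset.range (j + 1), (1 - q ^ (k + 1))) ^ 2)
      = fun j => a (j + 1) := by
    funext j
    rw [hadef]
    rfl
  have hsummable' : Summable (fun j : ℕ =>
      q ^ ((j + 1) ^ 2) / (∏ k ∈ Finset.range (j + 1), (1 - q ^ (k + 1))) ^ 2) := by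
    rw [hfun]
    exact (summable_nat_add_iff 1).mpr hsummable
  refine ⟨hsummable', multipliable_q q h0 h1, hC.ne', ?_⟩
  have ha0 : a 0 = 1 := by
    rw [hadef]
    simp [Pq]
  have := Summable.tsum_eq_zero_add hsummable
  rw [ha0] at this
  rw [hfun, ← this, htsum]
end

section
/- Let p be an odd prime and n ≥ 1 an integer. Then the real number 1 − ∏_{i=1}^∞ (1 − p^{−i}) · ( 1 + Σ_{j=1}^{n−1} p^{−j²} ∏_{k=1}^{j} (1 − p^{−k})^{−2} ) is strictly positive. -/
open Finset Filter Topology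

noncomputable def Qp (q : ℝ) (n : ℕ) : ℝ := ∏ k ∈ Finset.range n, (1 - q ^ (k + 1))

noncomputable def gB (q : ℝ) : ℕ → ℕ → ℝ
  | 0, 0 => 1
  | 0, _ + 1 => 0
  | _ + 1, 0 => 1
  | n + 1, j + 1 => gB q n (j + 1) + q ^ (n - j) * gB q n j

lemma gB_zero (q : ℝ) (n : ℕ) : gB q n 0 = 1 := by cases n <;> rfl

lemma gB_succ_succ (q : ℝ) (n j : ℕ) :
    gB q (n + 1) (j + 1) = gB q n (j + 1) + q ^ (n - j) * gB q n j := rfl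

lemma gB_of_lt (q : ℝ) : ∀ n j, n < j → gB q n j = 0 := by
  intro n
  induction n with
  | zero =>
    intro j hj
    match j, hj with
    | j + 1, _ => rfl
  | succ n ih =>
    intro j hj
    match j, hj with
    | j + 1, hj =>
      rw [gB_succ_succ, ih (j + 1) (by omega), ih j (by omega)]
      ring

lemma gB_nonneg {q : ℝ} (hq : 0 ≤ q) : ∀ n j, 0 ≤ gB q n j := by
  intro n
  induction n with
  | zero => intro j; cases j <;> simp [gB]
  | succ n ih =>
    intro j
    cases j with
    | zero => simp [gB]
    | succ j =>
      rw [gB_succ_succ]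
      have := ih (j + 1)
      have := ih j
      positivity

lemma Qp_zero (q : ℝ) : Qp q 0 = 1 := by simp [Qp]

lemma Qp_succ (q : ℝ) (n : ℕ) : Qp q (n + 1) = Qp q n * (1 - q ^ (n + 1)) :=
  Finset.prod_range_succ _ _

lemma Qp_pos {q : ℝ} (hq0 : 0 ≤ q) (hq1 : q < 1) (n : ℕ) : 0 < Qp q n :=
  Finset.prod_pos fun k _ => by
    have : q ^ (k + 1) < 1 := pow_lt_one₀ hq0 hq1 (Nat.succ_ne_zero k)
    linarith

lemma Qp_le_one {q : ℝ} (hq0 : 0 ≤ q) (hq1 : q < 1) (n : ℕ) : Qp q n ≤ 1 :=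
  Finset.prod_le_one
    (fun k _ => by
      have : q ^ (k + 1) < 1 := pow_lt_one₀ hq0 hq1 (Nat.succ_ne_zero k)
      linarith)
    (fun k _ => by nlinarith [pow_nonneg hq0 (k + 1)])

lemma one_sub_pow_ne_s9 {q : ℝ} (hq0 : 0 ≤ q) (hq1 : q < 1) (k : ℕ) : 1 - q ^ (k + 1) ≠ 0 := by
  have : q ^ (k + 1) < 1 := pow_lt_one₀ hq0 hq1 (Nat.succ_ne_zero k)
  intro h; linarith

lemma gB_eq {q : ℝ} (hq0 : 0 ≤ q) (hq1 : q < 1) :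
    ∀ n j, j ≤ n → gB q n j = Qp q n / (Qp q j * Qp q (n - j)) := by
  intro n
  induction n with
  | zero =>
    intro j hj
    interval_cases j
    simp [gB, Qp]
  | succ n ih =>
    intro j hj
    have hQpos := Qp_pos hq0 hq1
    match j with
    | 0 => simp [gB_zero, Qp_zero, (hQpos (n + 1)).ne']
    | j + 1 =>
      rcases Nat.lt_or_ge j n with hlt | hge
      · -- j + 1 ≤ n
        obtain ⟨m, hm⟩ : ∃ m, n = j + 1 + m := ⟨n - (j + 1), by omega⟩
        subst hm
        rw [gB_succ_succ, ih (j + 1) (by omega), ih j (by omega)]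
        have e1 : j + 1 + m - (j + 1) = m := by omega
        have e2 : j + 1 + m - j = m + 1 := by omega
        have e3 : j + 1 + m + 1 - (j + 1) = m + 1 := by omega
        rw [e1, e2, e3, Qp_succ q (j + 1 + m), Qp_succ q m, Qp_succ q j]
        have h1 := one_sub_pow_ne_s9 hq0 hq1 m
        have h2 := one_sub_pow_ne_s9 hq0 hq1 j
        have h3 : (0:ℝ) < Qp q m := hQpos m
        have h4 : (0:ℝ) < Qp q j := hQpos j
        have h5 : (0:ℝ) < Qp q (j + 1 + m) := hQpos _
        have hpow : q ^ (j + 1 + m - j) = q ^ (m + 1) := by rw [e2]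
        have hqq : q ^ (j + 1 + m + 1) = q ^ (m + 1) * q ^ (j + 1) := by
          rw [← pow_add]; congr 1; omega
        rw [hqq]
        field_simp
        ring
      · -- j = n
        have hj' : j = n := by omega
        subst hj'
        rw [gB_succ_succ, gB_of_lt q j (j + 1) (by omega)]
        have : gB q j j = 1 := by
          rw [ih j le_rfl]
          simp [Qp_zero, (hQpos j).ne']
        rw [this]
        simp [Qp_zero, (hQpos (j + 1)).ne']

lemma key {q : ℝ} (hq0 : 0 ≤ q) (hq1 : q < 1) :
    ∀ N a, ∑ j ∈ Finset.range (N + 1), q ^ (j * (j + a)) * gB q N j / Qp q (j + a)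
      = 1 / Qp q (N + a) := by
  intro N
  induction N with
  | zero =>
    intro a
    simp [gB_zero]
  | succ N ih =>
    intro a
    have hQpos := Qp_pos hq0 hq1
    rw [Finset.sum_range_succ']
    have split : ∀ i ∈ Finset.range (N + 1),
        q ^ ((i + 1) * ((i + 1) + a)) * gB q (N + 1) (i + 1) / Qp q ((i + 1) + a)
        = q ^ ((i + 1) * ((i + 1) + a)) * gB q N (i + 1) / Qp q ((i + 1) + a)
          + q ^ (N + a + 1) * (q ^ (i * (i + (a + 1))) * gB q N i / Qp q (i + (a + 1))) := by
      intro i hi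
      have hiN : i ≤ N := by simpa [Nat.lt_succ_iff] using hi
      rw [gB_succ_succ]
      have hd : (i + 1) + a = i + (a + 1) := by omega
      have hq' : q ^ ((i + 1) * (i + (a + 1))) * q ^ (N - i)
          = q ^ (N + a + 1) * q ^ (i * (i + (a + 1))) := by
        rw [← pow_add, ← pow_add]
        congr 1
        obtain ⟨k, hk⟩ : ∃ k, N = i + k := ⟨N - i, by omega⟩
        subst hk
        simp only [Nat.add_sub_cancel_left]
        ring
      rw [hd, mul_add, add_div]
      congr 1
      rw [← mul_assoc, hq']
      ring
    rw [Finset.sum_congr rfl split, Finset.sum_add_distrib, ← Finset.mul_sum, ih (a + 1)]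
    have first : (∑ i ∈ Finset.range (N + 1),
          q ^ ((i + 1) * ((i + 1) + a)) * gB q N (i + 1) / Qp q ((i + 1) + a))
        + q ^ (0 * (0 + a)) * gB q (N + 1) 0 / Qp q (0 + a) = 1 / Qp q (N + a) := by
      have h2 : (∑ i ∈ Finset.range (N + 1),
            q ^ ((i + 1) * ((i + 1) + a)) * gB q N (i + 1) / Qp q ((i + 1) + a))
          + q ^ (0 * (0 + a)) * gB q N 0 / Qp q (0 + a)
          = ∑ j ∈ Finset.range (N + 2), q ^ (j * (j + a)) * gB q N j / Qp q (j + a) :=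
        (Finset.sum_range_succ'
          (fun j => q ^ (j * (j + a)) * gB q N j / Qp q (j + a)) (N + 1)).symm
      simp only [gB_zero] at h2 ⊢
      rw [h2, Finset.sum_range_succ, gB_of_lt q N (N + 1) (by omega), ih a]
      ring
    rw [add_comm (∑ i ∈ Finset.range (N + 1),
          q ^ ((i + 1) * ((i + 1) + a)) * gB q N (i + 1) / Qp q ((i + 1) + a))
        (q ^ (N + a + 1) * (1 / Qp q (N + (a + 1)))), add_assoc, first]
    have e : N + (a + 1) = (N + a) + 1 := by omega
    have e2 : N + 1 + a = (N + a) + 1 := by omega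
    rw [e, e2, Qp_succ q (N + a)]
    have h1 := one_sub_pow_ne_s9 hq0 hq1 (N + a)
    have h3 : (0:ℝ) < Qp q (N + a) := hQpos _
    field_simp
    ring

lemma partial_le {q : ℝ} (hq0 : 0 ≤ q) (hq1 : q < 1) (M N : ℕ) (h : M ≤ N) :
    Qp q N * ∑ j ∈ Finset.range (M + 1), q ^ (j * j) * gB q N j / Qp q j ≤ 1 := by
  have hfull := key hq0 hq1 N 0
  simp only [Nat.add_zero] at hfull
  have hQpos := Qp_pos hq0 hq1
  have hsub : ∑ j ∈ Finset.range (M + 1), q ^ (j * j) * gB q N j / Qp q j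
      ≤ ∑ j ∈ Finset.range (N + 1), q ^ (j * j) * gB q N j / Qp q j :=
    Finset.sum_le_sum_of_subset_of_nonneg
      (Finset.range_subset_range.2 (by omega))
      (fun j _ _ => div_nonneg (mul_nonneg (pow_nonneg hq0 _) (gB_nonneg hq0 N j))
        (hQpos j).le)
  calc Qp q N * ∑ j ∈ Finset.range (M + 1), q ^ (j * j) * gB q N j / Qp q j
      ≤ Qp q N * ∑ j ∈ Finset.range (N + 1), q ^ (j * j) * gB q N j / Qp q j :=
        mul_le_mul_of_nonneg_left hsub (hQpos N).le
    _ = 1 := by rw [hfull, mul_one_div, div_self (hQpos N).ne']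

lemma sum_q_le {q : ℝ} (hq0 : 0 ≤ q) (hq3 : q ≤ 1 / 3) (n : ℕ) :
    ∑ k ∈ Finset.range n, q ^ (k + 1) ≤ 1 / 2 := by
  have hq1 : q ≠ 1 := by intro h; rw [h] at hq3; norm_num at hq3
  have h1 : ∑ k ∈ Finset.range n, q ^ (k + 1) = q * ((q ^ n - 1) / (q - 1)) := by
    rw [← geom_sum_eq hq1, Finset.mul_sum]
    exact Finset.sum_congr rfl fun k _ => by rw [← pow_succ']
  rw [h1]
  have h2 : (q ^ n - 1) / (q - 1) = (1 - q ^ n) / (1 - q) := by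
    rw [← neg_div_neg_eq]; ring_nf
  rw [h2]
  have h3 : 0 < 1 - q := by linarith
  have h4 : 0 ≤ q ^ n := pow_nonneg hq0 _
  have h5 : q ^ n ≤ 1 := pow_le_one₀ hq0 (by linarith)
  rw [mul_div_assoc'] at *
  rw [div_le_iff₀ h3]
  nlinarith

lemma Qp_ge {q : ℝ} (hq0 : 0 ≤ q) (hq1 : q < 1) (n : ℕ) :
    1 - ∑ k ∈ Finset.range n, q ^ (k + 1) ≤ Qp q n := by
  induction n with
  | zero => simp [Qp_zero]
  | succ n ih =>
    rw [Qp_succ, Finset.sum_range_succ]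
    have h1 : Qp q n ≤ 1 := Qp_le_one hq0 hq1 n
    have h2 : 0 < Qp q n := Qp_pos hq0 hq1 n
    have h3 : 0 ≤ q ^ (n + 1) := pow_nonneg hq0 _
    have h4 : q ^ (n + 1) < 1 := pow_lt_one₀ hq0 hq1 (Nat.succ_ne_zero n)
    nlinarith

lemma Qp_ge_half {q : ℝ} (hq0 : 0 ≤ q) (hq3 : q ≤ 1 / 3) (n : ℕ) :
    1 / 2 ≤ Qp q n := by
  have hq1 : q < 1 := by linarith
  have := Qp_ge hq0 hq1 n
  have := sum_q_le hq0 hq3 n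
  linarith

lemma summable_log {q : ℝ} (hq0 : 0 < q) (hq3 : q ≤ 1 / 3) :
    Summable fun i : ℕ => Real.log (1 - q ^ (i + 1)) := by
  have hq1 : q < 1 := by linarith
  have hx : ∀ i : ℕ, q ^ (i + 1) ≤ q ^ 1 := fun i =>
    pow_le_pow_of_le_one hq0.le hq1.le (by omega)
  have hpos : ∀ i : ℕ, 0 < 1 - q ^ (i + 1) := fun i => by
    have : q ^ (i + 1) < 1 := pow_lt_one₀ hq0.le hq1 (Nat.succ_ne_zero i)
    linarith
  have hbound : ∀ i : ℕ, -Real.log (1 - q ^ (i + 1)) ≤ 2 * q ^ (i + 1) := by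
    intro i
    have h1 : Real.log ((1 - q ^ (i + 1))⁻¹) ≤ (1 - q ^ (i + 1))⁻¹ - 1 :=
      Real.log_le_sub_one_of_pos (inv_pos.2 (hpos i))
    rw [Real.log_inv] at h1
    have h2 : q ^ (i + 1) ≤ 1 / 3 := le_trans (hx i) (by simpa using hq3)
    have h3 : 0 < 1 - q ^ (i + 1) := hpos i
    have h4 : (1 - q ^ (i + 1))⁻¹ - 1 = q ^ (i + 1) / (1 - q ^ (i + 1)) := by
      field_simp
      ring
    rw [h4] at h1
    have h5 : q ^ (i + 1) / (1 - q ^ (i + 1)) ≤ 2 * q ^ (i + 1) := by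
      rw [div_le_iff₀ h3]
      nlinarith [pow_nonneg hq0.le (i + 1)]
    linarith
  have hgeom : Summable fun i : ℕ => 2 * q ^ (i + 1) := by
    have := (summable_geometric_of_lt_one hq0.le hq1).mul_left (2 * q)
    apply this.congr
    intro i
    rw [pow_succ']
    ring
  have hneg : Summable fun i : ℕ => -Real.log (1 - q ^ (i + 1)) :=
    Summable.of_nonneg_of_le
      (fun i => by
        have : Real.log (1 - q ^ (i + 1)) ≤ 0 :=
          Real.log_nonpos (hpos i).le (by nlinarith [pow_nonneg hq0.le (i + 1)])
        linarith)
      hbound hgeom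
  simpa using hneg.neg

lemma multipliable_Q {q : ℝ} (hq0 : 0 < q) (hq3 : q ≤ 1 / 3) :
    Multipliable (fun i : ℕ => 1 - q ^ (i + 1)) := by
  have hq1 : q < 1 := by linarith
  exact Real.multipliable_of_summable_log
    (fun i => by
      have h : q ^ (i + 1) < 1 := pow_lt_one₀ hq0.le hq1 (Nat.succ_ne_zero i)
      show (0:ℝ) < 1 - q ^ (i + 1)
      linarith)
    (summable_log hq0 hq3)

lemma QtoP {q : ℝ} (hq0 : 0 < q) (hq3 : q ≤ 1 / 3) :
    Tendsto (fun N => Qp q N) atTop (𝓝 (∏' i : ℕ, (1 - q ^ (i + 1)))) := by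
  simpa [Qp] using ((multipliable_Q hq0 hq3).hasProd).tendsto_prod_nat

lemma P_half {q : ℝ} (hq0 : 0 < q) (hq3 : q ≤ 1 / 3) :
    1 / 2 ≤ ∏' i : ℕ, (1 - q ^ (i + 1)) :=
  ge_of_tendsto' (QtoP hq0 hq3) (Qp_ge_half hq0.le hq3)

lemma P_mul_T_le_one {q : ℝ} (hq0 : 0 < q) (hq3 : q ≤ 1 / 3) (M : ℕ) :
    (∏' i : ℕ, (1 - q ^ (i + 1))) *
      ∑ j ∈ Finset.range (M + 1), q ^ (j * j) * ((Qp q j)⁻¹) ^ 2 ≤ 1 := by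
  have hq1 : q < 1 := by linarith
  have hQpos := Qp_pos hq0.le hq1
  set P := ∏' i : ℕ, (1 - q ^ (i + 1)) with hP
  have hPtend : Tendsto (fun N => Qp q N) atTop (𝓝 P) := QtoP hq0 hq3
  have hPhalf : 1 / 2 ≤ P := P_half hq0 hq3
  have hPne : P ≠ 0 := by intro h; rw [h] at hPhalf; norm_num at hPhalf
  have hterm : ∀ j : ℕ, Tendsto
      (fun N : ℕ => q ^ (j * j) * ((Qp q j)⁻¹) ^ 2 * (Qp q N * Qp q N / Qp q (N - j)))
      atTop (𝓝 (q ^ (j * j) * ((Qp q j)⁻¹) ^ 2 * P)) := by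
    intro j
    have h1 : Tendsto (fun N : ℕ => Qp q (N - j)) atTop (𝓝 P) :=
      hPtend.comp (tendsto_sub_atTop_nat j)
    have h2 : Tendsto (fun N : ℕ => Qp q N * Qp q N / Qp q (N - j)) atTop
        (𝓝 (P * P / P)) := (hPtend.mul hPtend).div h1 hPne
    have h3 : P * P / P = P := by field_simp
    rw [h3] at h2
    exact tendsto_const_nhds.mul h2
  have hsum : Tendsto
      (fun N : ℕ => ∑ j ∈ Finset.range (M + 1),
        q ^ (j * j) * ((Qp q j)⁻¹) ^ 2 * (Qp q N * Qp q N / Qp q (N - j)))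
      atTop (𝓝 (∑ j ∈ Finset.range (M + 1), q ^ (j * j) * ((Qp q j)⁻¹) ^ 2 * P)) :=
    tendsto_finset_sum _ fun j _ => hterm j
  have hle : ∀ᶠ N : ℕ in atTop,
      (∑ j ∈ Finset.range (M + 1),
        q ^ (j * j) * ((Qp q j)⁻¹) ^ 2 * (Qp q N * Qp q N / Qp q (N - j))) ≤ 1 := by
    filter_upwards [eventually_ge_atTop M] with N hN
    have heq : (∑ j ∈ Finset.range (M + 1),
        q ^ (j * j) * ((Qp q j)⁻¹) ^ 2 * (Qp q N * Qp q N / Qp q (N - j)))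
        = Qp q N * ∑ j ∈ Finset.range (M + 1), q ^ (j * j) * gB q N j / Qp q j := by
      rw [Finset.mul_sum]
      refine Finset.sum_congr rfl fun j hj => ?_
      rw [gB_eq hq0.le hq1 N j (le_trans (Nat.lt_succ_iff.mp (Finset.mem_range.mp hj)) hN)]
      have h1 := (hQpos j).ne'
      have h2 := (hQpos (N - j)).ne'
      have h3 := (hQpos N).ne'
      field_simp
    rw [heq]
    exact partial_le hq0.le hq1 M N hN
  have hfin := le_of_tendsto hsum hle
  calc P * ∑ j ∈ Finset.range (M + 1), q ^ (j * j) * ((Qp q j)⁻¹) ^ 2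
      = ∑ j ∈ Finset.range (M + 1), q ^ (j * j) * ((Qp q j)⁻¹) ^ 2 * P := by
        rw [Finset.mul_sum]; exact Finset.sum_congr rfl fun j _ => by ring
    _ ≤ 1 := hfin

/-- For an odd prime `p` and `n ≥ 1`, the quantity
`1 − ∏_{i=1}^∞ (1 − p^{−i}) · (1 + Σ_{j=1}^{n−1} p^{−j²} ∏_{k=1}^{j} (1 − p^{−k})^{−2})`
is strictly positive. -/
theorem cl_density_lower_bound_pos (p : ℕ) (hp : p.Prime) (hodd : Odd p)
    (n : ℕ) (hn : 1 ≤ n) :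
    0 < 1 - (∏' i : ℕ, (1 - ((p : ℝ) ^ (i + 1))⁻¹)) *
        (1 + ∑ j ∈ Finset.range (n - 1),
          ((p : ℝ) ^ ((j + 1) ^ 2))⁻¹ *
            ((∏ k ∈ Finset.range (j + 1), (1 - ((p : ℝ) ^ (k + 1))⁻¹))⁻¹) ^ 2) := by
  have hp3 : 3 ≤ p := by
    have h2 := hp.two_le
    have hne : p ≠ 2 := by
      rintro rfl
      rw [Nat.odd_iff] at hodd
      norm_num at hodd
    omega
  have hp0 : (0:ℝ) < (p : ℝ) := by positivity
  simp only [← inv_pow]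
  set q : ℝ := ((p : ℝ))⁻¹ with hq
  have hq0 : 0 < q := inv_pos.2 hp0
  have hq3 : q ≤ 1 / 3 := by
    rw [hq, show (1:ℝ)/3 = ((3:ℝ))⁻¹ by norm_num]
    exact inv_anti₀ (by norm_num) (by exact_mod_cast hp3)
  have hq1 : q < 1 := by linarith
  have hQpos := Qp_pos hq0.le hq1
  have hQdef : ∀ m : ℕ, (∏ k ∈ Finset.range m, (1 - q ^ (k + 1))) = Qp q m := fun m => rfl
  simp only [hQdef]
  have hT : (1 + ∑ j ∈ Finset.range (n - 1), q ^ ((j + 1) ^ 2) * ((Qp q (j + 1))⁻¹) ^ 2)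
      = ∑ j ∈ Finset.range ((n - 1) + 1), q ^ (j * j) * ((Qp q j)⁻¹) ^ 2 := by
    rw [Finset.sum_range_succ' (fun j => q ^ (j * j) * ((Qp q j)⁻¹) ^ 2) (n - 1)]
    simp only [Qp_zero, Nat.mul_zero, pow_zero, inv_one, one_pow, mul_one]
    rw [add_comm]
    congr 1
    refine Finset.sum_congr rfl fun j _ => ?_
    rw [pow_two]
  rw [hT]
  have hsucc : (n - 1) + 1 = n := by omega
  rw [hsucc]
  set P := ∏' i : ℕ, (1 - q ^ (i + 1)) with hP
  have hPhalf : 1 / 2 ≤ P := P_half hq0 hq3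
  have hPpos : 0 < P := by linarith
  have h1 := P_mul_T_le_one hq0 hq3 n
  rw [Finset.sum_range_succ, mul_add] at h1
  have hfn : 0 < q ^ (n * n) * ((Qp q n)⁻¹) ^ 2 := by
    have := hQpos n
    positivity
  nlinarith [mul_pos hPpos hfn]
end
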